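/- Let K(x,y) = ⟨y⟩^{(1+α)/2} / ( ⟨x−y⟩^{1+α} ⟨x⟩^{(1+α)/2} ) restricted to the region |x−y| ≥ (⟨x⟩+⟨y⟩)/2, where α > 0 and ⟨x⟩ = √(1+x²). Then there exists C > 0 such that ∫ K(x,y) ⟨x⟩^{−1/2} dx ≤ C ⟨y⟩^{−(1+α)/2} for all y and ∫ K(x,y) ⟨y⟩^{−(1+α)/2} dy ≤ C ⟨x⟩^{−1/2} for all x; consequently the integral operator with kernel K is bounded on L²(ℝ). -/

import Mathlib

/-!
On the region `|x - y| ≥ (⟨x⟩ + ⟨y⟩)/2` we have `⟨y⟩ ≤ 2|x - y| ≤ 2⟨x - y⟩`, so the kernel is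
dominated by the rank-one kernel `2^(1+α) g(x) g(y)` with `g = ⟨·⟩^(-(1+α)/2)`. Since `1 + α > 1`,
`g ∈ L²` and `g ⟨·⟩^(-1/2)` is integrable, which gives both Schur bounds; the `L²` bound follows
from Cauchy–Schwarz applied to the rank-one majorant.
-/

open MeasureTheory

noncomputable def jb (x : ℝ) : ℝ := Real.sqrt (1 + x ^ 2)

lemma jb_pos (x : ℝ) : 0 < jb x := Real.sqrt_pos.mpr (by positivity)

lemma one_le_jb (x : ℝ) : 1 ≤ jb x := Real.one_le_sqrt.mpr (by nlinarith [sq_nonneg x])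

lemma abs_le_jb (x : ℝ) : |x| ≤ jb x := Real.abs_le_sqrt (by linarith)

lemma continuous_jb : Continuous jb := by unfold jb; fun_prop

lemma integrable_jb_rpow {a : ℝ} (ha : a < -1) : Integrable (fun x => jb x ^ a) := by
  refine (integrable_rpow_neg_one_add_norm_sq (E := ℝ) (μ := volume) (r := -a)
    (by simp; linarith)).congr (.of_forall fun x => ?_)
  simp only [jb, Real.sqrt_eq_rpow, Real.norm_eq_abs, sq_abs]
  rw [← Real.rpow_mul (by positivity)]
  ring_nf

lemma integrable_jb_rpow_mul {a b : ℝ} (hab : a + b < -1) :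
    Integrable (fun x => jb x ^ a * jb x ^ b) := by
  simpa only [← Real.rpow_add (jb_pos _)] using integrable_jb_rpow hab

lemma memLp_two_jb_rpow {a : ℝ} (ha : a < -1 / 2) : MemLp (fun x => jb x ^ a) 2 volume := by
  rw [memLp_two_iff_integrable_sq (continuous_jb.rpow_const fun x =>
    .inl (jb_pos x).ne').aestronglyMeasurable]
  simpa only [sq] using integrable_jb_rpow_mul (a := a) (b := a) (by linarith)

section KernelBounds

variable {X Y : Type*} [MeasurableSpace X] [MeasurableSpace Y] {μ : Measure X} {ν : Measure Y}

theorem integral_mul_le_mul_integral {k g w : X → ℝ} {a : ℝ} (hk : ∀ x, 0 ≤ k x)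
    (hkg : ∀ x, k x ≤ a * g x) (hw : ∀ x, 0 ≤ w x)
    (hgw : Integrable (fun x => g x * w x) μ) :
    ∫ x, k x * w x ∂μ ≤ a * ∫ x, g x * w x ∂μ := by
  rw [← integral_const_mul]
  refine integral_mono_of_nonneg (.of_forall fun x => mul_nonneg (hk x) (hw x))
    (hgw.const_mul a) (.of_forall fun x => ?_)
  exact (mul_le_mul_of_nonneg_right (hkg x) (hw x)).trans_eq (mul_assoc _ _ _)

theorem memLp_two_integral_kernel_of_le_mul [SFinite ν] {K : X → Y → ℝ} {g : X → ℝ}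
    {h : Y → ℝ} (hK : AEStronglyMeasurable (Function.uncurry K) (μ.prod ν))
    (hKgh : ∀ x y, ‖K x y‖ ≤ g x * h y) (hg : MemLp g 2 μ) (hh : MemLp h 2 ν)
    {f : Y → ℝ} (hf : MemLp f 2 ν) :
    MemLp (fun x => ∫ y, K x y * f y ∂ν) 2 μ ∧
      eLpNorm (fun x => ∫ y, K x y * f y ∂ν) 2 μ ≤
        eLpNorm g 2 μ * eLpNorm h 2 ν * eLpNorm f 2 ν := by
  set M := ∫⁻ y, ‖h y‖ₑ * ‖f y‖ₑ ∂ν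
  have hHolder : M ≤ eLpNorm h 2 ν * eLpNorm f 2 ν := by
    simpa [eLpNorm_one_eq_lintegral_enorm, enorm_mul] using
      eLpNorm_smul_le_mul_eLpNorm (p := 2) (q := 2) (r := 1) hf.1 hh.1
  have hKe : ∀ x y, ‖K x y‖ₑ ≤ ‖g x‖ₑ * ‖h y‖ₑ := fun x y => by
    rw [← enorm_mul, enorm_le_iff_norm_le]
    exact (hKgh x y).trans (le_abs_self _)
  have hpointwise : ∀ x, ‖∫ y, K x y * f y ∂ν‖ₑ ≤ M * ‖g x‖ₑ := fun x => calc
    ‖∫ y, K x y * f y ∂ν‖ₑ ≤ ∫⁻ y, ‖K x y * f y‖ₑ ∂ν := enorm_integral_le_lintegral_enorm _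
    _ ≤ ∫⁻ y, ‖g x‖ₑ * (‖h y‖ₑ * ‖f y‖ₑ) ∂ν := lintegral_mono fun y => by
        rw [enorm_mul, ← mul_assoc]
        gcongr
        exact hKe x y
    _ = M * ‖g x‖ₑ := by rw [lintegral_const_mul' _ _ enorm_ne_top, mul_comm]
  have hbound : eLpNorm (fun x => ∫ y, K x y * f y ∂ν) 2 μ ≤
      eLpNorm g 2 μ * eLpNorm h 2 ν * eLpNorm f 2 ν := calc
    _ ≤ M * eLpNorm g 2 μ := eLpNorm_le_mul_eLpNorm_of_ae_le_mul'' 2 hg.1 (.of_forall hpointwise)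
    _ ≤ _ := by rw [mul_comm, mul_assoc]; gcongr
  have hmeas : AEStronglyMeasurable (fun x => ∫ y, K x y * f y ∂ν) μ :=
    (hK.mul hf.1.comp_snd).integral_prod_right'
  exact ⟨⟨hmeas, hbound.trans_lt (ENNReal.mul_lt_top (ENNReal.mul_lt_top hg.2 hh.2) hf.2)⟩,
    hbound⟩

end KernelBounds

noncomputable def farKernel (s x y : ℝ) : ℝ :=
  if (jb x + jb y) / 2 ≤ |x - y| then jb y ^ (s / 2) / (jb (x - y) ^ s * jb x ^ (s / 2)) else 0

lemma farKernel_nonneg (s x y : ℝ) : 0 ≤ farKernel s x y := by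
  unfold farKernel jb
  split_ifs <;> positivity

lemma farKernel_le {s : ℝ} (hs : 0 ≤ s) (x y : ℝ) :
    farKernel s x y ≤ 2 ^ s * jb x ^ (-s / 2) * jb y ^ (-s / 2) := by
  have hx := jb_pos x
  have hy := jb_pos y
  have hxy := jb_pos (x - y)
  unfold farKernel
  split_ifs with h
  · have hpow : jb y ^ s ≤ 2 ^ s * jb (x - y) ^ s := by
      rw [← Real.mul_rpow zero_le_two hxy.le]
      exact Real.rpow_le_rpow hy.le (by linarith [abs_le_jb (x - y)]) hs
    have hx1 : jb x ^ (-s / 2) * jb x ^ (s / 2) = 1 := by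
      rw [← Real.rpow_add hx, neg_div, neg_add_cancel, Real.rpow_zero]
    rw [div_le_iff₀ (by positivity)]
    calc jb y ^ (s / 2) = jb y ^ s * jb y ^ (-s / 2) := by rw [← Real.rpow_add hy]; ring_nf
      _ ≤ 2 ^ s * jb (x - y) ^ s * jb y ^ (-s / 2) := by gcongr
      _ = _ := by linear_combination (-(2:ℝ) ^ s * jb (x - y) ^ s * jb y ^ (-s / 2)) * hx1
  · positivity

lemma measurable_farKernel (s : ℝ) : Measurable (Function.uncurry (farKernel s)) := by
  have := continuous_jb.measurable
  exact Measurable.ite (measurableSet_le (by fun_prop) (by fun_prop)) (by fun_prop) measurable_const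

section FarKernel

variable {s : ℝ}

lemma farKernel_schur_bounds (hs : 1 < s) : ∃ C > 0,
    (∀ y, ∫ x, farKernel s x y * jb x ^ (-(1 : ℝ) / 2) ≤ C * jb y ^ (-s / 2)) ∧
    (∀ x, ∫ y, farKernel s x y * jb y ^ (-s / 2) ≤ C * jb x ^ (-(1 : ℝ) / 2)) := by
  set G : ℝ → ℝ := fun t => jb t ^ (-s / 2)
  set w : ℝ → ℝ := fun t => jb t ^ (-(1 : ℝ) / 2)
  have hG : ∀ t, 0 ≤ G t := fun t => (Real.rpow_pos_of_pos (jb_pos t) _).le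
  have hw : ∀ t, 0 ≤ w t := fun t => (Real.rpow_pos_of_pos (jb_pos t) _).le
  have hGw : ∀ t, G t ≤ w t := fun t =>
    Real.rpow_le_rpow_of_exponent_le (one_le_jb t) (by linarith)
  have hKle : ∀ x y, farKernel s x y ≤ 2 ^ s * G x * G y := farKernel_le (by linarith)
  set I := ∫ t, G t * w t
  set J := ∫ t, G t * G t
  refine ⟨max (max (2 ^ s * I) (2 ^ s * J)) 1, by positivity, fun y => ?_, fun x => ?_⟩
  · calc ∫ x, farKernel s x y * w x ≤ 2 ^ s * G y * I :=
          integral_mul_le_mul_integral (farKernel_nonneg _ · y)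
            (fun x => (hKle x y).trans_eq (by ring)) hw (integrable_jb_rpow_mul (by linarith))
      _ = 2 ^ s * I * G y := by ring
      _ ≤ _ := by gcongr; exacts [hG y, (le_max_left _ _).trans (le_max_left _ _)]
  · calc ∫ y, farKernel s x y * G y ≤ 2 ^ s * w x * J :=
          integral_mul_le_mul_integral (farKernel_nonneg _ x)
            (fun y => (hKle x y).trans (by gcongr; exacts [hG y, hGw x])) hG
            (integrable_jb_rpow_mul (by linarith))
      _ = 2 ^ s * J * w x := by ring
      _ ≤ _ := by gcongr; exacts [hw x, (le_max_right _ _).trans (le_max_left _ _)]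

lemma exists_eLpNorm_integral_farKernel_le (hs : 1 < s) : ∃ C > 0, ∀ f : ℝ → ℝ,
    MemLp f 2 volume → MemLp (fun x => ∫ y, farKernel s x y * f y) 2 volume ∧
      eLpNorm (fun x => ∫ y, farKernel s x y * f y) 2 volume ≤
        ENNReal.ofReal C * eLpNorm f 2 volume := by
  set G : ℝ → ℝ := fun t => jb t ^ (-s / 2)
  have hG : MemLp G 2 volume := memLp_two_jb_rpow (by linarith)
  set A := eLpNorm (fun x => 2 ^ s * G x) 2 volume * eLpNorm G 2 volume
  have hA : A ≠ ⊤ := (ENNReal.mul_lt_top (hG.const_mul _).2 hG.2).ne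
  refine ⟨max A.toReal 1, by positivity, fun f hf => ?_⟩
  obtain ⟨hmem, hnorm⟩ := memLp_two_integral_kernel_of_le_mul
    (measurable_farKernel s).aestronglyMeasurable
    (fun x y => (Real.norm_of_nonneg (farKernel_nonneg _ _ _)).trans_le
      (farKernel_le (by linarith) x y))
    (hG.const_mul _) hG hf
  refine ⟨hmem, hnorm.trans ?_⟩
  gcongr
  exact (ENNReal.le_ofReal_iff_toReal_le hA (by positivity)).2 (le_max_left _ _)

end FarKernel

/-- Schur bounds and `L²` boundedness for the far-off-diagonal kernel
`K(x,y) = ⟨y⟩^{(1+α)/2} / (⟨x-y⟩^{1+α} ⟨x⟩^{(1+α)/2})` restricted to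
`|x-y| ≥ (⟨x⟩+⟨y⟩)/2`. -/
theorem stmt7 (α : ℝ) (hα : 0 < α)
    (K : ℝ → ℝ → ℝ)
    (hK : ∀ x y : ℝ, K x y =
      if (jb x + jb y) / 2 ≤ |x - y| then
        jb y ^ ((1 + α) / 2) / (jb (x - y) ^ (1 + α) * jb x ^ ((1 + α) / 2))
      else 0) :
    (∃ C > 0,
      (∀ y : ℝ, (∫ x : ℝ, K x y * jb x ^ (-(1 : ℝ) / 2)) ≤ C * jb y ^ (-(1 + α) / 2)) ∧
      (∀ x : ℝ, (∫ y : ℝ, K x y * jb y ^ (-(1 + α) / 2)) ≤ C * jb x ^ (-(1 : ℝ) / 2))) ∧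
    ∃ C' > 0, ∀ f : ℝ → ℝ, MemLp f 2 volume →
      MemLp (fun x => ∫ y : ℝ, K x y * f y) 2 volume ∧
      eLpNorm (fun x => ∫ y : ℝ, K x y * f y) 2 volume ≤
        ENNReal.ofReal C' * eLpNorm f 2 volume := by
  obtain rfl : K = farKernel (1 + α) := funext₂ hK
  exact ⟨farKernel_schur_bounds (by linarith), exists_eLpNorm_integral_farKernel_le (by linarith)⟩
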